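/- Let d ≥ 1, let x₀ ∈ ℝ^d, and let d̂ ∈ ℝ^d be a unit vector. Write r = x − x₀ and define the dipole field h : ℝ^d ∖ {x₀} → ℝ^d by h(x) = (d·(r rᵀ)/‖r‖² − I) d̂ / ‖r‖^d. Then h is curl free on ℝ^d ∖ {x₀}: for every x ≠ x₀ the Jacobian Dh(x) is a symmetric linear map, i.e., ⟨Dh(x) v, w⟩ = ⟨Dh(x) w, v⟩ for all v, w ∈ ℝ^d (in components, ∂h_i/∂x_j(x) = ∂h_j/∂x_i(x) for all i, j). -/

import Mathlib

/-!
The dipole field is the gradient of the potential `φ(x) = -⟪x - x₀, d̂⟫ / ‖x - x₀‖ ^ d` on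
`ℝ^d ∖ {x₀}`, so its Jacobian is the Hessian of `φ`, which is symmetric by Schwarz's theorem.
-/

open RealInnerProductSpace

/-- The dipole field `h(x) = (d (r rᵀ)/‖r‖² − I) d̂ / ‖r‖^d` with `r = x − x₀`,
where `(r rᵀ) v = ⟨r, v⟩ r` and `I` is the identity. -/
noncomputable def dipoleField {d : ℕ} (x₀ dv : EuclideanSpace ℝ (Fin d)) :
    EuclideanSpace ℝ (Fin d) → EuclideanSpace ℝ (Fin d) := fun x =>
  (‖x - x₀‖ ^ d)⁻¹ •
    ((((d : ℝ) * ⟪x - x₀, dv⟫) / ‖x - x₀‖ ^ 2) • (x - x₀) - dv)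

open Topology

section

variable {E : Type*} [NormedAddCommGroup E] [InnerProductSpace ℝ E]

theorem inner_fderiv_symmetric_of_eventually_hasFDerivAt_innerSL {f : E → ℝ} {g : E → E}
    {x : E} (hf : ∀ᶠ y in 𝓝 x, HasFDerivAt f (innerSL ℝ (g y)) y)
    (hg : DifferentiableAt ℝ g x) (v w : E) :
    ⟪fderiv ℝ g x v, w⟫ = ⟪fderiv ℝ g x w, v⟫ :=
  second_derivative_symmetric_of_eventually hf
    ((innerSL ℝ).hasFDerivAt.comp x hg.hasFDerivAt) v w

theorem hasFDerivAt_norm {x : E} (hx : x ≠ 0) :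
    HasFDerivAt (‖·‖) (‖x‖⁻¹ • innerSL ℝ x) x := by
  have h := (hasStrictFDerivAt_norm_sq x).hasFDerivAt.sqrt (by positivity)
  simp only [Real.sqrt_sq (norm_nonneg _)] at h
  refine h.congr_fderiv ?_
  ext v
  simp only [one_div, mul_inv_rev, smul_apply, coe_innerSL_apply, nsmul_eq_mul, Nat.cast_ofNat,
    smul_eq_mul]
  field_simp

theorem hasFDerivAt_inv_norm_pow (n : ℕ) {x : E} (hx : x ≠ 0) :
    HasFDerivAt (fun y => (‖y‖ ^ n)⁻¹) (-(n * (‖x‖ ^ n)⁻¹ / ‖x‖ ^ 2) • innerSL ℝ x) x := by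
  have hx' : ‖x‖ ≠ 0 := norm_ne_zero_iff.2 hx
  refine (((hasDerivAt_pow n ‖x‖).inv (pow_ne_zero n hx')).comp_hasFDerivAt x
    (hasFDerivAt_norm hx)).congr_fderiv ?_
  rw [smul_smul]
  congr 1
  -- `hasDerivAt_pow` involves the truncated exponent `n - 1`
  rcases n with _ | n
  · simp
  · simp only [Nat.add_sub_cancel]
    field_simp
    ring

theorem hasFDerivAt_neg_inner_mul_inv_norm_pow (a : E) (n : ℕ) {x : E} (hx : x ≠ 0) :
    HasFDerivAt (fun y => -(⟪y, a⟫ * (‖y‖ ^ n)⁻¹))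
      (innerSL ℝ ((‖x‖ ^ n)⁻¹ • ((n * ⟪x, a⟫ / ‖x‖ ^ 2) • x - a))) x := by
  refine ((((hasFDerivAt_id x).inner ℝ (hasFDerivAt_const a x)).mul
    (hasFDerivAt_inv_norm_pow n hx)).neg).congr_fderiv ?_
  ext v
  simp only [id_eq, real_inner_comm, neg_smul, smul_neg, neg_add_rev, neg_neg, add_apply,
    neg_apply, smul_apply, ContinuousLinearMap.comp_apply, ContinuousLinearMap.prod_apply,
    ContinuousLinearMap.id_apply, zero_apply, fderivInnerCLM_apply, inner_zero_right, zero_add,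
    smul_eq_mul, coe_innerSL_apply, map_smul, map_sub, sub_apply]
  ring

end

noncomputable def dipolePotential {d : ℕ} (x₀ dv : EuclideanSpace ℝ (Fin d)) :
    EuclideanSpace ℝ (Fin d) → ℝ := fun x =>
  -(⟪x - x₀, dv⟫ * (‖x - x₀‖ ^ d)⁻¹)

theorem hasFDerivAt_dipolePotential {d : ℕ} (x₀ dv : EuclideanSpace ℝ (Fin d))
    {x : EuclideanSpace ℝ (Fin d)} (hx : x ≠ x₀) :
    HasFDerivAt (dipolePotential x₀ dv) (innerSL ℝ (dipoleField x₀ dv x)) x := by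
  exact (hasFDerivAt_neg_inner_mul_inv_norm_pow dv d (sub_ne_zero.2 hx)).comp x
    ((hasFDerivAt_id x).sub_const x₀)

theorem differentiableAt_dipoleField {d : ℕ} (x₀ dv : EuclideanSpace ℝ (Fin d))
    {x : EuclideanSpace ℝ (Fin d)} (hx : x ≠ x₀) :
    DifferentiableAt ℝ (dipoleField x₀ dv) x := by
  have hr : x - x₀ ≠ 0 := sub_ne_zero.2 hx
  have hr' : ‖x - x₀‖ ≠ 0 := norm_ne_zero_iff.2 hr
  have hsub : DifferentiableAt ℝ (· - x₀) x := differentiableAt_id.sub_const x₀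
  have hnorm : DifferentiableAt ℝ (‖· - x₀‖) x := hsub.norm ℝ hr
  have hinner : DifferentiableAt ℝ (⟪· - x₀, dv⟫) x := hsub.inner ℝ (differentiableAt_const dv)
  unfold dipoleField
  fun_prop (disch := simp [hr'])

theorem dipoleField_jacobian_symm_general (d : ℕ)
    (x₀ dv : EuclideanSpace ℝ (Fin d)) :
    ∀ x : EuclideanSpace ℝ (Fin d), x ≠ x₀ →
      ∀ v w : EuclideanSpace ℝ (Fin d),
        ⟪fderiv ℝ (dipoleField x₀ dv) x v, w⟫
          = ⟪fderiv ℝ (dipoleField x₀ dv) x w, v⟫ := fun _ hx =>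
  inner_fderiv_symmetric_of_eventually_hasFDerivAt_innerSL
    ((isOpen_ne.eventually_mem hx).mono fun _ hy => hasFDerivAt_dipolePotential x₀ dv hy)
    (differentiableAt_dipoleField x₀ dv hx)

/-- The dipole field is curl free away from the dipole location: its Jacobian
`Dh(x)` is a symmetric linear map, i.e. `⟨Dh(x) v, w⟩ = ⟨Dh(x) w, v⟩`. -/
theorem dipoleField_jacobian_symm (d : ℕ) (hd : 1 ≤ d)
    (x₀ dv : EuclideanSpace ℝ (Fin d)) (hdv : ‖dv‖ = 1) :
    ∀ x : EuclideanSpace ℝ (Fin d), x ≠ x₀ →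
      ∀ v w : EuclideanSpace ℝ (Fin d),
        ⟪fderiv ℝ (dipoleField x₀ dv) x v, w⟫
          = ⟪fderiv ℝ (dipoleField x₀ dv) x w, v⟫ :=
  dipoleField_jacobian_symm_general d x₀ dv
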